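/- The weighted total variation distance between plug-in and true posteriors satisfies wTV(π_Ĥ, π_H*) ≤ TV(f_Ĥ, f_H*) + TV(g_Ĥ, g_H*), where wTV integrates the pointwise TV of the posteriors against the true marginal density. -/

import Mathlib

/-!
For fixed `x`, multiplying the difference of the posteriors by `f*(x)` gives
`φ ĝ f*/f̂ - φ g* = φ ĝ (f* - f̂)/f̂ + φ (ĝ - g*)`, so
`f*(x) ∫ |π̂(θ|x) - π*(θ|x)| dθ ≤ |f̂(x) - f*(x)| + ∫ φ(x - θ) |ĝ(θ) - g*(θ)| dθ`.
Integrating over `x` and exchanging the integrals, `∫ φ(x - θ) dx = 1` turns the last term into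
`∫ |ĝ - g*|`. Nothing Gaussian is used beyond this normalisation and the boundedness of `φ`.
-/

open MeasureTheory ProbabilityTheory Real
open scoped NNReal ENNReal
open Function (uncurry)

noncomputable section

theorem abs_div_sub_div_mul_le {p q a b : ℝ} (hp : 0 ≤ p) (ha : 0 < a) (hb : 0 ≤ b) :
    |p / a - q / b| * b ≤ p * (|a - b| / a) + |p - q| := by
  rcases hb.eq_or_lt with rfl | hb
  · simp only [mul_zero]; positivity
  have hsplit : (p / a - q / b) * b = p * ((b - a) / a) + (p - q) := by field_simp; ring
  calc |p / a - q / b| * b = |p * ((b - a) / a) + (p - q)| := by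
        rw [← hsplit, abs_mul, abs_of_pos hb]
    _ ≤ |p * ((b - a) / a)| + |p - q| := abs_add_le _ _
    _ = p * (|a - b| / a) + |p - q| := by
        rw [abs_mul, abs_div, abs_of_nonneg hp, abs_of_pos ha, abs_sub_comm]

section Tonelli

variable {X Θ : Type*} [MeasurableSpace X] [MeasurableSpace Θ] {μ : Measure X} {ν : Measure Θ}
  [SFinite μ] [SFinite ν]

theorem lintegral_ofReal_integral {F : X → Θ → ℝ} (hF : Measurable (uncurry F))
    (hF₀ : ∀ x θ, 0 ≤ F x θ) (hFi : ∀ x, Integrable (F x) ν) :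
    ∫⁻ x, ENNReal.ofReal (∫ θ, F x θ ∂ν) ∂μ = ∫⁻ θ, ∫⁻ x, ENNReal.ofReal (F x θ) ∂μ ∂ν := by
  have hlin : ∀ x, ENNReal.ofReal (∫ θ, F x θ ∂ν) = ∫⁻ θ, ENNReal.ofReal (F x θ) ∂ν :=
    fun x => ofReal_integral_eq_lintegral_ofReal (hFi x) (ae_of_all _ (hF₀ x))
  simp_rw [hlin]
  exact lintegral_lintegral_swap hF.ennreal_ofReal.aemeasurable

end Tonelli

section Bayes

variable {X Θ : Type*} [MeasurableSpace Θ] {ν : Measure Θ} {k : X → Θ → ℝ} {g g' : Θ → ℝ}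

/-- `k x θ` is the likelihood of the observation `x` under the parameter `θ`, and `g` is a prior
density with respect to `ν`. -/
def marginalDensity (k : X → Θ → ℝ) (ν : Measure Θ) (g : Θ → ℝ) (x : X) : ℝ :=
  ∫ θ, k x θ * g θ ∂ν

def posteriorDensity (k : X → Θ → ℝ) (ν : Measure Θ) (g : Θ → ℝ) (x : X) (θ : Θ) : ℝ :=
  k x θ * g θ / marginalDensity k ν g x

theorem marginalDensity_nonneg (hk₀ : ∀ x θ, 0 ≤ k x θ) (hg₀ : ∀ θ, 0 ≤ g θ) (x : X) :
    0 ≤ marginalDensity k ν g x :=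
  integral_nonneg fun θ => mul_nonneg (hk₀ x θ) (hg₀ θ)

theorem MeasureTheory.Integrable.mul_abs_sub {a : Θ → ℝ} (ha : ∀ θ, 0 ≤ a θ)
    (hg : Integrable (fun θ => a θ * g θ) ν) (hg' : Integrable (fun θ => a θ * g' θ) ν) :
    Integrable (fun θ => a θ * |g θ - g' θ|) ν :=
  (hg.sub hg').abs.congr (ae_of_all _ fun θ => by
    simp only [Pi.sub_apply, ← mul_sub, abs_mul, abs_of_nonneg (ha θ)])

theorem integral_abs_posteriorDensity_sub_mul_le (hk₀ : ∀ x θ, 0 ≤ k x θ) (hg₀ : ∀ θ, 0 ≤ g θ)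
    (hg₀' : ∀ θ, 0 ≤ g' θ) (hkg : ∀ x, Integrable (fun θ => k x θ * g θ) ν)
    (hkg' : ∀ x, Integrable (fun θ => k x θ * g' θ) ν) {x : X}
    (hpos : 0 < marginalDensity k ν g x) :
    (∫ θ, |posteriorDensity k ν g x θ - posteriorDensity k ν g' x θ| ∂ν)
        * marginalDensity k ν g' x
      ≤ |marginalDensity k ν g x - marginalDensity k ν g' x|
        + marginalDensity k ν (fun θ => |g θ - g' θ|) x := by
  set f := marginalDensity k ν g x
  set f' := marginalDensity k ν g' x
  have hkΔ := (hkg x).mul_abs_sub (hk₀ x) (hkg' x)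
  calc (∫ θ, |posteriorDensity k ν g x θ - posteriorDensity k ν g' x θ| ∂ν) * f'
      = ∫ θ, |k x θ * g θ / f - k x θ * g' θ / f'| * f' ∂ν := (integral_mul_const _ _).symm
    _ ≤ ∫ θ, (k x θ * g θ * (|f - f'| / f) + k x θ * |g θ - g' θ|) ∂ν := by
        refine integral_mono_of_nonneg (ae_of_all _ fun θ => ?_)
          (((hkg x).mul_const _).add hkΔ) (ae_of_all _ fun θ => ?_)
        · exact mul_nonneg (abs_nonneg _) (marginalDensity_nonneg hk₀ hg₀' x)
        · refine (abs_div_sub_div_mul_le (mul_nonneg (hk₀ x θ) (hg₀ θ)) hpos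
            (marginalDensity_nonneg hk₀ hg₀' x)).trans_eq ?_
          rw [← mul_sub, abs_mul, abs_of_nonneg (hk₀ x θ)]
    _ = |f - f'| + marginalDensity k ν (fun θ => |g θ - g' θ|) x := by
        rw [integral_add ((hkg x).mul_const _) hkΔ, integral_mul_const]
        exact congrArg (· + _) (mul_div_cancel₀ _ hpos.ne')

variable [MeasurableSpace X] {μ : Measure X} [SFinite μ] [SFinite ν]

theorem stronglyMeasurable_marginalDensity (hk : Measurable (uncurry k))
    (hg : Measurable g) : StronglyMeasurable (marginalDensity k ν g) :=
  StronglyMeasurable.integral_prod_right (f := fun x θ => k x θ * g θ)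
    (hk.mul (hg.comp measurable_snd)).stronglyMeasurable

theorem lintegral_ofReal_marginalDensity (hk : Measurable (uncurry k))
    (hk₀ : ∀ x θ, 0 ≤ k x θ) (hk₁ : ∀ θ, ∫⁻ x, ENNReal.ofReal (k x θ) ∂μ = 1)
    (hg : Measurable g) (hg₀ : ∀ θ, 0 ≤ g θ) (hkg : ∀ x, Integrable (fun θ => k x θ * g θ) ν) :
    ∫⁻ x, ENNReal.ofReal (marginalDensity k ν g x) ∂μ = ∫⁻ θ, ENNReal.ofReal (g θ) ∂ν := by
  unfold marginalDensity
  rw [lintegral_ofReal_integral (hk.mul (hg.comp measurable_snd))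
    (fun x θ => mul_nonneg (hk₀ x θ) (hg₀ θ)) hkg]
  refine lintegral_congr fun θ => ?_
  simp_rw [ENNReal.ofReal_mul (hk₀ _ θ)]
  rw [lintegral_mul_const _ hk.of_uncurry_right.ennreal_ofReal, hk₁, one_mul]

theorem integrable_marginalDensity (hk : Measurable (uncurry k))
    (hk₀ : ∀ x θ, 0 ≤ k x θ) (hk₁ : ∀ θ, ∫⁻ x, ENNReal.ofReal (k x θ) ∂μ = 1)
    (hg : Measurable g) (hg₀ : ∀ θ, 0 ≤ g θ) (hgi : Integrable g ν)
    (hkg : ∀ x, Integrable (fun θ => k x θ * g θ) ν) :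
    Integrable (marginalDensity k ν g) μ := by
  refine ⟨(stronglyMeasurable_marginalDensity hk hg).aestronglyMeasurable, ?_⟩
  rw [hasFiniteIntegral_iff_ofReal (ae_of_all _ (marginalDensity_nonneg hk₀ hg₀)),
    lintegral_ofReal_marginalDensity hk hk₀ hk₁ hg hg₀ hkg]
  exact (hasFiniteIntegral_iff_ofReal (ae_of_all _ hg₀)).mp hgi.2

theorem integral_marginalDensity (hk : Measurable (uncurry k))
    (hk₀ : ∀ x θ, 0 ≤ k x θ) (hk₁ : ∀ θ, ∫⁻ x, ENNReal.ofReal (k x θ) ∂μ = 1)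
    (hg : Measurable g) (hg₀ : ∀ θ, 0 ≤ g θ) (hkg : ∀ x, Integrable (fun θ => k x θ * g θ) ν) :
    ∫ x, marginalDensity k ν g x ∂μ = ∫ θ, g θ ∂ν := by
  rw [integral_eq_lintegral_of_nonneg_ae (ae_of_all _ (marginalDensity_nonneg hk₀ hg₀))
      (stronglyMeasurable_marginalDensity hk hg).aestronglyMeasurable,
    integral_eq_lintegral_of_nonneg_ae (ae_of_all _ hg₀) hg.aestronglyMeasurable,
    lintegral_ofReal_marginalDensity hk hk₀ hk₁ hg hg₀ hkg]

theorem integral_tv_posteriorDensity_le (hk : Measurable (uncurry k))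
    (hk₀ : ∀ x θ, 0 ≤ k x θ) (hk₁ : ∀ θ, ∫⁻ x, ENNReal.ofReal (k x θ) ∂μ = 1)
    (hg : Measurable g) (hg' : Measurable g') (hg₀ : ∀ θ, 0 ≤ g θ) (hg₀' : ∀ θ, 0 ≤ g' θ)
    (hgi : Integrable g ν) (hgi' : Integrable g' ν)
    (hkg : ∀ x, Integrable (fun θ => k x θ * g θ) ν)
    (hkg' : ∀ x, Integrable (fun θ => k x θ * g' θ) ν)
    (hpos : ∀ x, 0 < marginalDensity k ν g x) :
    ∫ x, ((1 / 2) * ∫ θ, |posteriorDensity k ν g x θ - posteriorDensity k ν g' x θ| ∂ν)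
        * marginalDensity k ν g' x ∂μ
      ≤ (1 / 2) * (∫ x, |marginalDensity k ν g x - marginalDensity k ν g' x| ∂μ)
        + (1 / 2) * ∫ θ, |g θ - g' θ| ∂ν := by
  have hΔ : Measurable fun θ => |g θ - g' θ| := (hg.sub hg').abs
  have hkΔ : ∀ x, Integrable (fun θ => k x θ * |g θ - g' θ|) ν := fun x =>
    (hkg x).mul_abs_sub (hk₀ x) (hkg' x)
  have hf : Integrable (fun x => |marginalDensity k ν g x - marginalDensity k ν g' x|) μ :=
    ((integrable_marginalDensity hk hk₀ hk₁ hg hg₀ hgi hkg).sub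
      (integrable_marginalDensity hk hk₀ hk₁ hg' hg₀' hgi' hkg')).abs
  have hT := integrable_marginalDensity hk hk₀ hk₁ hΔ (fun θ => abs_nonneg _)
    (hgi.sub hgi').abs hkΔ
  calc _ ≤ ∫ x, (1 / 2) * (|marginalDensity k ν g x - marginalDensity k ν g' x|
          + marginalDensity k ν (fun θ => |g θ - g' θ|) x) ∂μ := by
        refine integral_mono_of_nonneg (ae_of_all _ fun x => ?_) ((hf.add hT).const_mul _)
          (ae_of_all _ fun x => ?_)
        · exact mul_nonneg (by positivity) (marginalDensity_nonneg hk₀ hg₀' x)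
        · dsimp only
          rw [mul_assoc]
          exact mul_le_mul_of_nonneg_left (integral_abs_posteriorDensity_sub_mul_le hk₀ hg₀ hg₀'
            hkg hkg' (hpos x)) (by norm_num)
    _ = _ := by
        rw [integral_const_mul, integral_add hf hT,
          integral_marginalDensity hk hk₀ hk₁ hΔ (fun θ => abs_nonneg _) hkΔ, mul_add]

end Bayes

section Gaussian

theorem gaussianPDFReal_le (μ : ℝ) (v : ℝ≥0) (x : ℝ) :
    gaussianPDFReal μ v x ≤ (√(2 * π * v))⁻¹ := by
  refine mul_le_of_le_one_right (by positivity) (exp_le_one_iff.mpr ?_)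
  exact div_nonpos_of_nonpos_of_nonneg (neg_nonpos.mpr (sq_nonneg _)) (by positivity)

theorem measurable_gaussianPDFReal_swap (v : ℝ≥0) :
    Measurable fun p : ℝ × ℝ => gaussianPDFReal p.2 v p.1 :=
  measurable_uncurry_gaussianPDFReal.comp
    (measurable_snd.prodMk (measurable_const.prodMk measurable_fst))

theorem lintegral_gaussianPDF_le_one (μ : ℝ) (v : ℝ≥0) : ∫⁻ x, gaussianPDF μ v x ≤ 1 := by
  rcases eq_or_ne v 0 with rfl | hv
  · simp [gaussianPDF_zero_var]
  · exact (lintegral_gaussianPDF_eq_one μ hv).le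

theorem integrable_gaussianPDFReal_mul {g : ℝ → ℝ} (hg : Integrable g) (v : ℝ≥0) (x : ℝ) :
    Integrable fun θ => gaussianPDFReal θ v x * g θ :=
  hg.bdd_mul
    ((measurable_gaussianPDFReal_swap v).comp measurable_prodMk_left).aestronglyMeasurable
    (ae_of_all _ fun θ => by
      rw [norm_of_nonneg (gaussianPDFReal_nonneg _ _ _)]
      exact gaussianPDFReal_le _ _ _)

def gaussianMixturePDF (H : Measure ℝ) (v : ℝ≥0) (θ : ℝ) : ℝ :=
  ∫ ξ, gaussianPDFReal ξ v θ ∂H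

variable (H : Measure ℝ) (v : ℝ≥0)

theorem gaussianMixturePDF_nonneg (θ : ℝ) : 0 ≤ gaussianMixturePDF H v θ :=
  integral_nonneg fun _ => gaussianPDFReal_nonneg _ _ _

theorem measurable_gaussianMixturePDF [SFinite H] : Measurable (gaussianMixturePDF H v) :=
  (StronglyMeasurable.integral_prod_right (f := fun θ ξ => gaussianPDFReal ξ v θ)
    (measurable_gaussianPDFReal_swap v).stronglyMeasurable).measurable

theorem integrable_gaussianPDFReal_mean [IsFiniteMeasure H] (θ : ℝ) :
    Integrable (fun ξ => gaussianPDFReal ξ v θ) H :=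
  .of_bound
    ((measurable_gaussianPDFReal_swap v).comp measurable_prodMk_left).aestronglyMeasurable _
    (ae_of_all _ fun _ => (norm_of_nonneg (gaussianPDFReal_nonneg _ _ _)).trans_le
      (gaussianPDFReal_le _ _ _))

theorem integrable_gaussianMixturePDF [IsFiniteMeasure H] :
    Integrable (gaussianMixturePDF H v) := by
  refine ⟨(measurable_gaussianMixturePDF H v).aestronglyMeasurable, ?_⟩
  rw [hasFiniteIntegral_iff_ofReal (ae_of_all _ (gaussianMixturePDF_nonneg H v))]
  unfold gaussianMixturePDF
  rw [lintegral_ofReal_integral (F := fun θ ξ => gaussianPDFReal ξ v θ)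
    (measurable_gaussianPDFReal_swap v) (fun _ _ => gaussianPDFReal_nonneg _ _ _)
    (integrable_gaussianPDFReal_mean H v)]
  exact (lintegral_mono fun ξ => lintegral_gaussianPDF_le_one ξ v).trans_lt (by simp)

end Gaussian

end

theorem wTV_le_TV_sum_general
    (c : ℝ)
    (Hhat Hstar : Measure ℝ) [IsProbabilityMeasure Hhat] [IsProbabilityMeasure Hstar]
    (ghat gstar fhat fstar : ℝ → ℝ)
    (hghat : ∀ θ, ghat θ = ∫ ξ, gaussianPDFReal ξ ((c ^ 2).toNNReal) θ ∂Hhat)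
    (hgstar : ∀ θ, gstar θ = ∫ ξ, gaussianPDFReal ξ ((c ^ 2).toNNReal) θ ∂Hstar)
    (hfhat : ∀ x, fhat x = ∫ θ, gaussianPDFReal θ 1 x * ghat θ)
    (hfstar : ∀ x, fstar x = ∫ θ, gaussianPDFReal θ 1 x * gstar θ)
    (hposhat : ∀ x, 0 < fhat x) :
    ∫ x, ((1 / 2) * ∫ θ, |gaussianPDFReal θ 1 x * ghat θ / fhat x
            - gaussianPDFReal θ 1 x * gstar θ / fstar x|) * fstar x
      ≤ (1 / 2) * (∫ x, |fhat x - fstar x|) + (1 / 2) * (∫ θ, |ghat θ - gstar θ|) := by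
  set v := (c ^ 2).toNNReal
  obtain rfl : fhat = marginalDensity (fun x θ => gaussianPDFReal θ 1 x) volume ghat :=
    funext hfhat
  obtain rfl : fstar = marginalDensity (fun x θ => gaussianPDFReal θ 1 x) volume gstar :=
    funext hfstar
  obtain rfl : ghat = gaussianMixturePDF Hhat v := funext hghat
  obtain rfl : gstar = gaussianMixturePDF Hstar v := funext hgstar
  exact integral_tv_posteriorDensity_le (measurable_gaussianPDFReal_swap 1)
    (fun _ _ => gaussianPDFReal_nonneg _ _ _)
    (fun θ => lintegral_gaussianPDFReal_eq_one θ one_ne_zero)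
    (measurable_gaussianMixturePDF Hhat v) (measurable_gaussianMixturePDF Hstar v)
    (gaussianMixturePDF_nonneg Hhat v) (gaussianMixturePDF_nonneg Hstar v)
    (integrable_gaussianMixturePDF Hhat v) (integrable_gaussianMixturePDF Hstar v)
    (integrable_gaussianPDFReal_mul (integrable_gaussianMixturePDF Hhat v) 1)
    (integrable_gaussianPDFReal_mul (integrable_gaussianMixturePDF Hstar v) 1) hposhat

/-- The weighted total variation distance between the plug-in and true posteriors satisfies
`wTV(π_Ĥ, π_H*) ≤ TV(f_Ĥ, f_H*) + TV(g_Ĥ, g_H*)`, where for a mixing measure `H`,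
`g_H(θ) = ∫ φ_c(θ-ξ)dH(ξ)` is the prior density, `f_H(x) = ∫ φ(x-θ) g_H(θ) dθ` is the
marginal density, `π_H(θ|x) = φ(x-θ)g_H(θ)/f_H(x)` the posterior density, and `wTV`
integrates the pointwise TV of the posteriors against the true marginal density `f_H*`. -/
theorem wTV_le_TV_sum
    (c : ℝ) (hc : 0 < c)
    (Hhat Hstar : Measure ℝ) [IsProbabilityMeasure Hhat] [IsProbabilityMeasure Hstar]
    (ghat gstar fhat fstar : ℝ → ℝ)
    (hghat : ∀ θ, ghat θ = ∫ ξ, gaussianPDFReal ξ ((c ^ 2).toNNReal) θ ∂Hhat)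
    (hgstar : ∀ θ, gstar θ = ∫ ξ, gaussianPDFReal ξ ((c ^ 2).toNNReal) θ ∂Hstar)
    (hfhat : ∀ x, fhat x = ∫ θ, gaussianPDFReal θ 1 x * ghat θ)
    (hfstar : ∀ x, fstar x = ∫ θ, gaussianPDFReal θ 1 x * gstar θ)
    (hposhat : ∀ x, 0 < fhat x) (hposstar : ∀ x, 0 < fstar x)
    (hposg : ∀ θ, 0 < ghat θ) (hposg' : ∀ θ, 0 < gstar θ) :
    ∫ x, ((1 / 2) * ∫ θ, |gaussianPDFReal θ 1 x * ghat θ / fhat x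
            - gaussianPDFReal θ 1 x * gstar θ / fstar x|) * fstar x
      ≤ (1 / 2) * (∫ x, |fhat x - fstar x|) + (1 / 2) * (∫ θ, |ghat θ - gstar θ|) :=
  wTV_le_TV_sum_general c Hhat Hstar ghat gstar fhat fstar hghat hgstar hfhat hfstar hposhat
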